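/- arXiv:1807.06477 — 9 statements merged into one kernel-verified Lean document; each statement's English description precedes it below -/
import Mathlib

section
/- Let Λ = ℤ² and let Γ ⊆ GL(Λ) be a finite subgroup such that every element of Γ has a non-zero fixed vector in Λ. Then Γ itself has a non-zero fixed vector in Λ. -/
/-!
A fixed vector `v ≠ 0` of `γ` makes `det (γ - 1) = det γ - tr γ + 1` vanish. If moreover
`det γ = 1`, then `tr γ = 2`, so by Cayley–Hamilton `(γ - 1)² = 0` and `γⁿ = 1 + n (γ - 1)`;
as `γ` has finite order, `γ = 1`. Hence `det` is injective on `Γ`, so `Γ` has at most one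
non-trivial element, and a fixed vector of that element is fixed by all of `Γ`.
-/

open Polynomial

instance Matrix.isAddTorsionFree {m n α : Type*} [AddMonoid α] [IsAddTorsionFree α] :
    IsAddTorsionFree (Matrix m n α) :=
  inferInstanceAs (IsAddTorsionFree (m → n → α))

theorem one_add_pow_of_sq_eq_zero {R : Type*} [Semiring R] {N : R} (hN : N ^ 2 = 0) (n : ℕ) :
    (1 + N) ^ n = 1 + n • N := by
  induction n with
  | zero => simp
  | succ k ih =>
    rw [pow_succ, ih, succ_nsmul, add_mul, mul_add, mul_add, one_mul, mul_one, one_mul,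
      smul_mul_assoc, ← sq, hN, smul_zero]
    abel

theorem eq_one_of_pow_eq_one_of_sub_one_sq_eq_zero {R : Type*} [Ring R] [IsAddTorsionFree R]
    {u : R} {n : ℕ} (hn : n ≠ 0) (hu : u ^ n = 1) (h : (u - 1) ^ 2 = 0) : u = 1 := by
  have hpow := one_add_pow_of_sq_eq_zero h n
  rw [add_sub_cancel, hu, left_eq_add, ← smul_zero n] at hpow
  exact sub_eq_zero.mp (nsmul_right_injective hn hpow)

namespace Matrix

theorem det_sub_one_eq_zero_of_mulVec_eq_self {n A : Type*} [Fintype n] [DecidableEq n]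
    [CommRing A] [IsDomain A] {M : Matrix n n A} {v : n → A} (hv : v ≠ 0) (hMv : M *ᵥ v = v) :
    (M - 1).det = 0 :=
  exists_mulVec_eq_zero_iff.mp ⟨v, hv, by rw [sub_mulVec, hMv, one_mulVec, sub_self]⟩

theorem det_sub_one_fin_two {R : Type*} [CommRing R] (M : Matrix (Fin 2) (Fin 2) R) :
    (M - 1).det = M.det - M.trace + 1 := by
  simp only [det_fin_two, trace_fin_two, sub_apply, one_apply_eq, ne_eq, zero_ne_one,
    not_false_eq_true, one_apply_ne, one_ne_zero]
  ring

theorem sub_one_sq_eq_zero_of_trace_eq_two {R : Type*} [CommRing R] [Nontrivial R]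
    {M : Matrix (Fin 2) (Fin 2) R} (htr : M.trace = 2) (hdet : M.det = 1) :
    (M - 1) ^ 2 = 0 := by
  have hcayley := M.aeval_self_charpoly
  rw [charpoly_fin_two, htr, hdet] at hcayley
  simp only [map_add, map_sub, map_mul, map_pow, aeval_X, map_ofNat, map_one] at hcayley
  rw [← hcayley]
  noncomm_ring

theorem eq_one_of_pow_eq_one_of_mulVec_eq_self {R : Type*} [CommRing R] [IsDomain R]
    [IsAddTorsionFree R] {M : Matrix (Fin 2) (Fin 2) R} {n : ℕ} (hn : n ≠ 0) (hMn : M ^ n = 1)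
    (hdet : M.det = 1) {v : Fin 2 → R} (hv : v ≠ 0) (hMv : M *ᵥ v = v) : M = 1 := by
  have hdet_sub := det_sub_one_eq_zero_of_mulVec_eq_self hv hMv
  have htr : M.trace = 2 := by
    rw [det_sub_one_fin_two, hdet] at hdet_sub
    linear_combination -hdet_sub
  exact eq_one_of_pow_eq_one_of_sub_one_sq_eq_zero hn hMn
    (sub_one_sq_eq_zero_of_trace_eq_two htr hdet)

theorem GeneralLinearGroup.eq_one_of_isOfFinOrder_of_det_eq_one {R : Type*} [CommRing R]
    [IsDomain R] [IsAddTorsionFree R] {γ : GL (Fin 2) R} (hγ : IsOfFinOrder γ)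
    (hdet : GeneralLinearGroup.det γ = 1) {v : Fin 2 → R} (hv : v ≠ 0)
    (hγv : (γ : Matrix (Fin 2) (Fin 2) R) *ᵥ v = v) : γ = 1 := by
  obtain ⟨n, hn, hγn⟩ := isOfFinOrder_iff_pow_eq_one.mp hγ
  refine Units.ext (eq_one_of_pow_eq_one_of_mulVec_eq_self hn.ne' ?_ ?_ hv hγv)
  · simpa using congrArg Units.val hγn
  · simpa using congrArg Units.val hdet

end Matrix

theorem Subgroup.eq_of_ne_one_of_map_eq_one_imp_eq_one {G : Type*} [Group G] (f : G →* ℤˣ)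
    {Γ : Subgroup G} (hΓ : ∀ γ ∈ Γ, f γ = 1 → γ = 1) {γ δ : G} (hγ : γ ∈ Γ) (hδ : δ ∈ Γ)
    (hγ1 : γ ≠ 1) (hδ1 : δ ≠ 1) : γ = δ := by
  have hfγ : f γ = -1 := (Int.units_eq_one_or _).resolve_left (mt (hΓ γ hγ) hγ1)
  have hfδ : f δ = -1 := (Int.units_eq_one_or _).resolve_left (mt (hΓ δ hδ) hδ1)
  refine mul_inv_eq_one.mp (hΓ _ (Γ.mul_mem hγ (Γ.inv_mem hδ)) ?_)
  rw [map_mul, map_inv, hfγ, hfδ, mul_inv_cancel]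

/-- If every element of a finite subgroup `Γ ⊆ GL(ℤ²)` has a non-zero fixed vector in `ℤ²`,
then `Γ` has a common non-zero fixed vector. -/
theorem stmt0 (Γ : Subgroup (Matrix.GeneralLinearGroup (Fin 2) ℤ))
    (hfin : (Γ : Set (Matrix.GeneralLinearGroup (Fin 2) ℤ)).Finite)
    (h : ∀ γ ∈ Γ, ∃ v : Fin 2 → ℤ, v ≠ 0 ∧
      (γ : Matrix (Fin 2) (Fin 2) ℤ).mulVec v = v) :
    ∃ v : Fin 2 → ℤ, v ≠ 0 ∧ ∀ γ ∈ Γ,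
      (γ : Matrix (Fin 2) (Fin 2) ℤ).mulVec v = v := by
  have : Finite Γ := hfin.to_subtype
  have hker : ∀ γ ∈ Γ, Matrix.GeneralLinearGroup.det γ = 1 → γ = 1 := fun γ hγ hdet ↦
    have hγ_fin := Γ.subtype.isOfFinOrder (isOfFinOrder_of_finite (⟨γ, hγ⟩ : Γ))
    have ⟨_, hv, hγv⟩ := h γ hγ
    Matrix.GeneralLinearGroup.eq_one_of_isOfFinOrder_of_det_eq_one hγ_fin hdet hv hγv
  by_cases htriv : ∀ γ ∈ Γ, γ = 1
  · exact ⟨![1, 0], by simp, fun γ hγ ↦ by simp [htriv γ hγ]⟩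
  push Not at htriv
  obtain ⟨γ₀, hγ₀, hγ₀1⟩ := htriv
  obtain ⟨v, hv, hγ₀v⟩ := h γ₀ hγ₀
  refine ⟨v, hv, fun γ hγ ↦ ?_⟩
  rcases eq_or_ne γ 1 with rfl | hγ1
  · simp
  · rwa [Subgroup.eq_of_ne_one_of_map_eq_one_imp_eq_one _ hker hγ hγ₀ hγ1 hγ₀1]
end

section
/- Let Λ = ℤ², let Γ ⊆ GL(Λ) be a finite subgroup, and let d > 6 be an integer. Suppose there is a vector v in Λ/dΛ that is invariant under the induced action of Γ and satisfies m·v ≠ 0 for all integers 1 ≤ m < d. Then there exists a non-zero Γ-invariant vector in Λ. -/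
/-!
Every `γ ∈ Γ` has finite order, so `|tr γ| ≤ 2` when `det γ = 1` (otherwise the traces of the
powers of `γ` grow without bound), and a finite-order `γ` with `det γ = 1` and `tr γ = 2` is the
identity, being unipotent. By Cayley–Hamilton, `γ² - (tr γ) γ + det γ = 0`; applied to the
invariant vector `v`, whose additive order is `d`, this gives `d ∣ 1 - tr γ + det γ`. For
`det γ = 1` this forces `tr γ = 2` since `d > 4`, hence `γ = 1`. So `det` embeds `Γ` into `{±1}`
and `|Γ| ≤ 2`. The average `w = ∑_{g ∈ Γ} g u` of a lift `u` of `v` is `Γ`-invariant and reduces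
to `|Γ| • v ≠ 0` modulo `d`.
-/

open Matrix

namespace Matrix

section CommRing

variable {R : Type*} [CommRing R]

theorem mul_self_eq_trace_smul_sub_det_smul_fin_two (M : Matrix (Fin 2) (Fin 2) R) :
    M * M = M.trace • M - M.det • (1 : Matrix (Fin 2) (Fin 2) R) := by
  ext i j
  fin_cases i <;> fin_cases j <;>
    simp [Matrix.mul_apply, Fin.sum_univ_two, trace_fin_two, det_fin_two] <;> ring

theorem trace_mul_self_fin_two (M : Matrix (Fin 2) (Fin 2) R) :
    (M * M).trace = M.trace ^ 2 - 2 * M.det := by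
  rw [mul_self_eq_trace_smul_sub_det_smul_fin_two, trace_sub, trace_smul, trace_smul, trace_one]
  simp only [smul_eq_mul, Fintype.card_fin, Nat.cast_ofNat]
  ring

theorem trace_pow_add_two_fin_two (M : Matrix (Fin 2) (Fin 2) R) (k : ℕ) :
    (M ^ (k + 2)).trace = M.trace * (M ^ (k + 1)).trace - M.det * (M ^ k).trace := by
  have : M ^ (k + 2) = M.trace • M ^ (k + 1) - M.det • M ^ k := by
    rw [pow_add, pow_two, mul_self_eq_trace_smul_sub_det_smul_fin_two, mul_sub, mul_smul_comm,
      mul_smul_comm, ← pow_succ, mul_one]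
  rw [this, trace_sub, trace_smul, trace_smul, smul_eq_mul, smul_eq_mul]

theorem one_sub_trace_add_det_smul_eq_zero_fin_two {M : Matrix (Fin 2) (Fin 2) R}
    {v : Fin 2 → R} (hv : M *ᵥ v = v) : (1 - M.trace + M.det) • v = 0 := by
  have h := congrArg (· *ᵥ v) (mul_self_eq_trace_smul_sub_det_smul_fin_two M)
  simp only [← mulVec_mulVec, hv, sub_mulVec, smul_mulVec, one_mulVec] at h
  rw [add_smul, sub_smul, one_smul]
  nth_rw 1 [h]
  abel

theorem addOrderOf_dvd_one_sub_trace_add_det_fin_two {M : Matrix (Fin 2) (Fin 2) ℤ}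
    {v : Fin 2 → R} (hv : M.map (Int.cast : ℤ → R) *ᵥ v = v) :
    (addOrderOf v : ℤ) ∣ 1 - M.trace + M.det := by
  rw [addOrderOf_dvd_iff_zsmul_eq_zero, ← Int.cast_smul_eq_zsmul R]
  have h := one_sub_trace_add_det_smul_eq_zero_fin_two hv
  have hdet : (M.map (Int.cast : ℤ → R)).det = M.det := ((Int.castRingHom R).map_det M).symm
  have htr : (M.map (Int.cast : ℤ → R)).trace = M.trace :=
    (AddMonoidHom.map_trace (Int.castRingHom R) M).symm
  rwa [hdet, htr, ← Int.cast_one, ← Int.cast_sub, ← Int.cast_add] at h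

end CommRing

theorem add_two_le_trace_pow_fin_two {R : Type*} [CommRing R] [LinearOrder R]
    [IsStrictOrderedRing R] {M : Matrix (Fin 2) (Fin 2) R} (hdet : M.det = 1)
    (htr : 3 ≤ M.trace) (k : ℕ) : (k : R) + 2 ≤ (M ^ k).trace := by
  -- `trace (M ^ (k + 2)) = trace M * trace (M ^ (k + 1)) - trace (M ^ k)` with `trace M ≥ 3`,
  -- so once the traces are positive and increasing they keep increasing by at least one
  have step : ∀ k : ℕ, (k : R) + 2 ≤ (M ^ k).trace ∧ (M ^ k).trace + 1 ≤ (M ^ (k + 1)).trace := by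
    intro k
    induction k with
    | zero => norm_num; linarith
    | succ k ih =>
      have hrec := trace_pow_add_two_fin_two M k
      rw [hdet, one_mul] at hrec
      push_cast
      constructor <;> nlinarith [ih.1, ih.2]
  exact (step k).1

theorem trace_le_two_of_isOfFinOrder_fin_two {M : Matrix (Fin 2) (Fin 2) ℤ} (hM : IsOfFinOrder M)
    (hdet : M.det = 1) : M.trace ≤ 2 := by
  obtain ⟨n, hn, hMn⟩ := isOfFinOrder_iff_pow_eq_one.mp hM
  by_contra! htr
  have := add_two_le_trace_pow_fin_two hdet htr n
  rw [hMn, trace_one, Fintype.card_fin] at this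
  omega

theorem sq_trace_le_four_of_isOfFinOrder_fin_two {M : Matrix (Fin 2) (Fin 2) ℤ}
    (hM : IsOfFinOrder M) (hdet : M.det = 1) : M.trace ^ 2 ≤ 4 := by
  have h := trace_le_two_of_isOfFinOrder_fin_two (hM.pow (n := 2))
    (by rw [det_pow, hdet, one_pow])
  rw [pow_two, trace_mul_self_fin_two, hdet] at h
  linarith

theorem eq_one_of_isOfFinOrder_of_trace_eq_two_fin_two {M : Matrix (Fin 2) (Fin 2) ℤ}
    (hM : IsOfFinOrder M) (hdet : M.det = 1) (htr : M.trace = 2) : M = 1 := by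
  obtain ⟨n, hn, hMn⟩ := isOfFinOrder_iff_pow_eq_one.mp hM
  have hN : (M - 1) * (M - 1) = 0 := by
    have := mul_self_eq_trace_smul_sub_det_smul_fin_two M
    rw [hdet, htr, one_smul, two_smul] at this
    rw [sub_mul, mul_sub, mul_sub, this]
    noncomm_ring
  have hpow : ∀ k : ℕ, M ^ k = 1 + (k : ℤ) • (M - 1) := by
    intro k
    induction k with
    | zero => simp
    | succ k ih =>
      have hNM : (M - 1) * M = M - 1 := by
        rw [← sub_eq_zero, ← mul_sub_one, hN]
      rw [pow_succ, ih, add_mul, one_mul, smul_mul_assoc, hNM]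
      push_cast
      rw [add_smul, one_smul]
      abel
  have h0 : (n : ℤ) • (M - 1) = 0 := by
    simpa [hMn] using (hpow n).symm
  rw [smul_eq_zero] at h0
  exact sub_eq_zero.mp (h0.resolve_left (by exact_mod_cast hn.ne'))

theorem eq_one_of_det_eq_one_of_mulVec_eq {R : Type*} [CommRing R]
    {M : Matrix (Fin 2) (Fin 2) ℤ} (hM : IsOfFinOrder M) (hdet : M.det = 1) {v : Fin 2 → R}
    (hv : M.map (Int.cast : ℤ → R) *ᵥ v = v) (hord : 4 < addOrderOf v) : M = 1 := by
  have hdvd := addOrderOf_dvd_one_sub_trace_add_det_fin_two hv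
  have hsq := sq_trace_le_four_of_isOfFinOrder_fin_two hM hdet
  have hlo : -2 ≤ M.trace := by nlinarith
  have hhi : M.trace ≤ 2 := by nlinarith
  rw [hdet] at hdvd
  have : 1 - M.trace + 1 = 0 :=
    Int.eq_zero_of_dvd_of_nonneg_of_lt (by omega) (by omega) hdvd
  exact eq_one_of_isOfFinOrder_of_trace_eq_two_fin_two hM hdet (by omega)

theorem GeneralLinearGroup.mulVec_sum_mulVec_eq {n R : Type*} [Fintype n] [DecidableEq n]
    [CommRing R] {Γ : Subgroup (GL n R)} [Fintype Γ] (u : n → R) {γ : GL n R} (hγ : γ ∈ Γ) :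
    (γ : Matrix n n R) *ᵥ ∑ g : Γ, ((g : GL n R) : Matrix n n R) *ᵥ u =
      ∑ g : Γ, ((g : GL n R) : Matrix n n R) *ᵥ u := by
  rw [mulVec_sum]
  refine Fintype.sum_equiv (Equiv.mulLeft ⟨γ, hγ⟩) _ _ fun g => ?_
  simp [mulVec_mulVec]

theorem GeneralLinearGroup.card_le_two_of_mulVec_eq {R : Type*} [CommRing R]
    (Γ : Subgroup (GL (Fin 2) ℤ)) [Finite Γ] {v : Fin 2 → R}
    (hinv : ∀ γ ∈ Γ, (γ : Matrix (Fin 2) (Fin 2) ℤ).map (Int.cast : ℤ → R) *ᵥ v = v)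
    (hord : 4 < addOrderOf v) : Nat.card Γ ≤ 2 := by
  have hdet : Function.Injective (GeneralLinearGroup.det.comp Γ.subtype) := by
    refine (injective_iff_map_eq_one _).mpr fun g hg => Subtype.ext (Units.ext ?_)
    have hg_fin : IsOfFinOrder ((g : GL (Fin 2) ℤ) : Matrix (Fin 2) (Fin 2) ℤ) :=
      (Units.coeHom _).isOfFinOrder (Γ.subtype.isOfFinOrder (isOfFinOrder_of_finite g))
    exact eq_one_of_det_eq_one_of_mulVec_eq hg_fin (congrArg Units.val hg) (hinv g g.2) hord
  simpa using Nat.card_le_card_of_injective _ hdet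

end Matrix

/-- Let `Γ ⊆ GL₂(ℤ)` be a finite subgroup and `d > 6` an integer.  If there is a vector
`v ∈ (ℤ/dℤ)²` invariant under the reduction mod `d` of every element of `Γ` and with
`m • v ≠ 0` for all `1 ≤ m < d`, then `Γ` has a non-zero invariant vector in `ℤ²`. -/
theorem stmt2 (Γ : Subgroup (Matrix.GeneralLinearGroup (Fin 2) ℤ))
    (hfin : (Γ : Set (Matrix.GeneralLinearGroup (Fin 2) ℤ)).Finite)
    (d : ℕ) (hd : 6 < d) (v : Fin 2 → ZMod d)
    (hinv : ∀ γ ∈ Γ,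
      ((γ : Matrix (Fin 2) (Fin 2) ℤ).map (Int.cast : ℤ → ZMod d)).mulVec v = v)
    (hord : ∀ m : ℕ, 0 < m → m < d → m • v ≠ 0) :
    ∃ w : Fin 2 → ℤ, w ≠ 0 ∧ ∀ γ ∈ Γ,
      (γ : Matrix (Fin 2) (Fin 2) ℤ).mulVec w = w := by
  have : Finite Γ := hfin.to_subtype
  let : Fintype Γ := Fintype.ofFinite Γ
  have hv : addOrderOf v = d := by
    refine (addOrderOf_eq_iff (by omega)).mpr ⟨?_, fun m hm hm0 => hord m hm0 hm⟩
    ext i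
    simp
  have hcard : Fintype.card Γ ≤ 2 := by
    rw [← Nat.card_eq_fintype_card]
    exact GeneralLinearGroup.card_le_two_of_mulVec_eq Γ hinv (by omega)
  let u : Fin 2 → ℤ := fun i => (v i).cast
  refine ⟨∑ g : Γ, ((g : GL (Fin 2) ℤ) : Matrix (Fin 2) (Fin 2) ℤ) *ᵥ u, ?_,
    fun γ hγ => GeneralLinearGroup.mulVec_sum_mulVec_eq u hγ⟩
  intro h
  refine hord (Fintype.card Γ) Fintype.card_pos (by omega) (funext fun i => ?_)
  have hu : (Int.castRingHom (ZMod d)) ∘ u = v := funext fun i => ZMod.intCast_zmod_cast (v i)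
  have hi := congrArg (Int.castRingHom (ZMod d)) (congrFun h i)
  simp only [Finset.sum_apply, map_sum, RingHom.map_mulVec, hu] at hi
  simpa [hinv _ (Subtype.prop _)] using hi
end

section
/- Let K be a field of characteristic p > 2, let V be a finite-dimensional K-vector space, and let q be a quadratic form on V that does not represent 0 (i.e. q(v) = 0 implies v = 0). Then the orthogonal group O(V, q)(K) contains no element of order p. -/
/-!
In characteristic `p`, an element `g` of order `p` satisfies `(g - 1)^p = g^p - 1 = 0`, so `g - 1`
is a nonzero nilpotent endomorphism. The last nonzero power of `g - 1` provides vectors with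
`g v₁ = v₁` and `g v₂ = v₁ + v₂`; invariance of the polar form under `g` then gives
`2 Q(v₁) = polar Q v₁ v₁ = 0`, so `v₁ ≠ 0` is an isotropic vector as soon as `p ≠ 2`.
-/

theorem isNilpotent_sub_one_of_pow_expChar_eq_one {R : Type*} [Ring R] (p : ℕ) [ExpChar R p]
    {x : R} (hx : x ^ p = 1) : IsNilpotent (x - 1) :=
  ⟨p, by rw [sub_pow_expChar_of_commute p (Commute.one_right x), hx, one_pow, sub_self]⟩

theorem Module.End.exists_ne_zero_apply_eq_zero_and_eq_apply_of_isNilpotent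
    {R M : Type*} [Semiring R] [AddCommMonoid M] [Module R M] {f : Module.End R M}
    (hf : IsNilpotent f) (hf0 : f ≠ 0) : ∃ v₁ v₂ : M, v₁ ≠ 0 ∧ f v₁ = 0 ∧ f v₂ = v₁ := by
  have : Nontrivial (Module.End R M) := nontrivial_of_ne f 0 hf0
  set m := nilpotencyClass f
  have hm : 2 ≤ m := by
    have h0 : 0 < m := pos_nilpotencyClass_iff.mpr hf
    have h1 : m ≠ 1 := mt nilpotencyClass_eq_one.mp hf0
    omega
  obtain ⟨w, hw⟩ : ∃ w, (f ^ (m - 1)) w ≠ 0 :=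
    not_forall.mp fun h ↦ pow_pred_nilpotencyClass hf (LinearMap.ext h)
  refine ⟨(f ^ (m - 1)) w, (f ^ (m - 2)) w, hw, ?_, ?_⟩
  · rw [← Module.End.mul_apply, ← pow_succ', Nat.sub_add_cancel (by omega),
      pow_nilpotencyClass hf, LinearMap.zero_apply]
  · rw [← Module.End.mul_apply, ← pow_succ', show m - 2 + 1 = m - 1 by omega]

namespace QuadraticMap

variable {R M N : Type*} [CommRing R] [AddCommGroup M] [AddCommGroup N] [Module R M] [Module R N]

theorem polar_map_of_forall_map_eq (Q : QuadraticMap R M N) {g : M →ₗ[R] M}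
    (hg : ∀ v, Q (g v) = Q v) (x y : M) : polar Q (g x) (g y) = polar Q x y := by
  simp only [polar, ← map_add, hg]

theorem polar_self_eq_zero_of_shear (Q : QuadraticMap R M N) {g : M →ₗ[R] M}
    (hg : ∀ v, Q (g v) = Q v) {v₁ v₂ : M} (h₁ : g v₁ = v₁) (h₂ : g v₂ = v₁ + v₂) :
    polar Q v₁ v₁ = 0 := by
  have h := Q.polar_map_of_forall_map_eq hg v₁ v₂
  rwa [h₁, h₂, polar_add_right, add_eq_right] at h

theorem exists_polar_self_eq_zero_of_isNilpotent_sub_one (Q : QuadraticMap R M N)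
    {g : Module.End R M} (hg : ∀ v, Q (g v) = Q v) (hu : IsNilpotent (g - 1)) (hg1 : g ≠ 1) : ∃ v ≠ 0, polar Q v v = 0 := by
  obtain ⟨v₁, v₂, hv₁, h₁, h₂⟩ :=
    Module.End.exists_ne_zero_apply_eq_zero_and_eq_apply_of_isNilpotent hu (sub_ne_zero.mpr hg1)
  rw [LinearMap.sub_apply, Module.End.one_apply, sub_eq_zero] at h₁
  rw [LinearMap.sub_apply, Module.End.one_apply, sub_eq_iff_eq_add] at h₂
  exact ⟨v₁, hv₁, Q.polar_self_eq_zero_of_shear hg h₁ h₂⟩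

end QuadraticMap

theorem stmt5_general (K : Type) [Field K] (p : ℕ) [CharP K p] (hp2 : 2 < p)
    (V : Type) [AddCommGroup V] [Module K V]
    (Q : QuadraticForm K V) (hQ : ∀ v : V, Q v = 0 → v = 0)
    (g : V ≃ₗ[K] V) (hg : ∀ v : V, Q (g v) = Q v) :
    orderOf g ≠ p := by
  intro hord
  have hp : p.Prime := (CharP.char_is_prime_or_zero K p).resolve_right (by omega)
  have hg1 : g ≠ 1 := by
    rintro rfl
    rw [orderOf_one] at hord
    omega
  have : Nontrivial V := by
    by_contra hV
    rw [not_nontrivial_iff_subsingleton] at hV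
    exact hg1 (Subsingleton.elim _ _)
  have : CharP (Module.End K V) p := charP_of_injective_algebraMap' K p
  have : ExpChar (Module.End K V) p := ExpChar.prime hp
  let u := LinearEquiv.automorphismGroup.toLinearMapMonoidHom (R := K) (M := V)
  have hup : u g ^ p = 1 := by rw [← map_pow, ← hord, pow_orderOf_eq_one, map_one]
  have hu1 : u g ≠ 1 := fun h ↦ hg1 (LinearEquiv.toLinearMap_injective h)
  obtain ⟨v, hv, hpolar⟩ := Q.exists_polar_self_eq_zero_of_isNilpotent_sub_one hg
    (isNilpotent_sub_one_of_pow_expChar_eq_one p hup) hu1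
  have h2 : (2 : K) ≠ 0 := Ring.two_ne_zero (by rw [ringChar.eq K p]; omega)
  rw [QuadraticMap.polar_self, nsmul_eq_mul, Nat.cast_ofNat, mul_eq_zero] at hpolar
  exact hv (hQ v (hpolar.resolve_left h2))

/-- Over a field of characteristic `p > 2`, the orthogonal group of a quadratic form that
does not represent `0` contains no element of order `p`. -/
theorem stmt5 (K : Type) [Field K] (p : ℕ) [CharP K p] (hp2 : 2 < p)
    (V : Type) [AddCommGroup V] [Module K V] [FiniteDimensional K V]
    (Q : QuadraticForm K V) (hQ : ∀ v : V, Q v = 0 → v = 0)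
    (g : V ≃ₗ[K] V) (hg : ∀ v : V, Q (g v) = Q v) :
    orderOf g ≠ p :=
  stmt5_general K p hp2 V Q hQ g hg
end

section
/- Let K be a field of characteristic ≠ 2 containing all roots of unity, V a finite-dimensional K-vector space, and q a quadratic form on V that does not represent 0 nontrivially. Then every element g of finite order in O(V,q)(K) satisfies g² = 1, and every finite subgroup of O(V,q)(K) is abelian of order at most 2^{dim V}. -/
/-!
An isometry `f` of an anisotropic form `Q` has no nontrivial unipotent part: if `(f - 1)² v = 0`,
then `w = (f - 1) v` is fixed by `f` and `polar v w = polar (f v) (f w) = polar v w + 2 Q w`, so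
`w = 0`. An eigenvector `v` with eigenvalue `r` gives `Q v = r² Q v`, so `r² = 1`. If `f` has finite
order, its minimal polynomial divides `Xⁿ - 1` and hence splits with roots `±1`, so `f² - 1` is
nilpotent; as `f²` is again an isometry, `f² = 1`.

A finite subgroup of isometries therefore has exponent `2` and is abelian. Commuting involutions
preserve each other's `±1`-eigenspaces, which are complementary when `2 ≠ 0`; splitting `V` along an
element other than `±1` and inducting on the dimension bounds the number of commuting involutions
by `2 ^ dim V`.
-/

open Polynomial Module Set

namespace Module.End

section Semiring

variable {R M : Type*} [Semiring R] [AddCommMonoid M] [Module R M]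

theorem eq_zero_of_isNilpotent_of_ker_sq_le {u : End R M} (hu : IsNilpotent u)
    (hker : LinearMap.ker (u ^ 2) ≤ LinearMap.ker u) : u = 0 := by
  obtain ⟨k, hk⟩ := hu
  have hpow : ∀ n v, (u ^ (n + 1)) v = 0 → u v = 0 := by
    intro n
    induction n with
    | zero => simp
    | succ n ih =>
      refine fun v h ↦ hker (ih (u v) ?_)
      rwa [← mul_apply, ← pow_succ]
  ext v
  exact hpow k v (by rw [pow_succ, hk, zero_mul, LinearMap.zero_apply])

theorem mapsTo_ker_of_commute {u g : End R M} (h : Commute u g) :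
    MapsTo g (LinearMap.ker u) (LinearMap.ker u) := fun x hx ↦ by
  rw [SetLike.mem_coe, LinearMap.mem_ker] at hx ⊢
  rw [← mul_apply, h.eq, mul_apply, hx, map_zero]

end Semiring

variable {K V : Type*} [Field K] [AddCommGroup V] [Module K V]

theorem isNilpotent_aeval_of_forall_hasEigenvalue [FiniteDimensional K V] {f : End K V}
    (hsplit : (minpoly K f).Splits) {p : K[X]} (hp : ∀ r, f.HasEigenvalue r → p.IsRoot r) :
    IsNilpotent (aeval f p) := by
  refine ⟨(minpoly K f).roots.card, ?_⟩
  have hdvd : minpoly K f ∣ p ^ (minpoly K f).roots.card := by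
    conv_lhs =>
      rw [hsplit.eq_prod_roots_of_monic (minpoly.monic (Algebra.IsIntegral.isIntegral f))]
    rw [← Multiset.prod_replicate, ← Multiset.map_const']
    exact Multiset.prod_dvd_prod_of_dvd _ _ fun r hr ↦
      dvd_iff_isRoot.mpr (hp r (hasEigenvalue_of_isRoot (mem_roots'.mp hr).2))
  rw [← map_pow]
  exact minpoly.dvd_iff.mp hdvd

section Isometry

variable (Q : QuadraticForm K V) {f : End K V}

theorem sq_eq_one_of_hasEigenvalue (hQ : Q.Anisotropic) (hf : ∀ v, Q (f v) = Q v) {r : K}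
    (hr : f.HasEigenvalue r) : r ^ 2 = 1 := by
  obtain ⟨v, hv⟩ := hr.exists_hasEigenvector
  have hQv : Q v ≠ 0 := fun h ↦ hv.2 (hQ v h)
  refine (mul_eq_right₀ hQv).mp ?_
  conv_rhs => rw [← hf v, hv.apply_eq_smul, QuadraticMap.map_smul, smul_eq_mul]
  rw [sq]

theorem ker_sq_sub_one_le (h2 : (2 : K) ≠ 0) (hQ : Q.Anisotropic) (hf : ∀ v, Q (f v) = Q v) :
    LinearMap.ker ((f - 1) ^ 2) ≤ LinearMap.ker (f - 1) := by
  intro v hv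
  rw [LinearMap.mem_ker, sq, mul_apply] at hv
  set w := (f - 1) v
  have hfw : f w = w := by simpa [sub_eq_zero] using hv
  have hfv : f v = v + w := by simp [w]
  have hpolar : QuadraticMap.polar Q v w = QuadraticMap.polar Q v w + 2 * Q w :=
    calc QuadraticMap.polar Q v w = QuadraticMap.polar Q (f v) (f w) := by
          simp only [QuadraticMap.polar, ← map_add, hf]
      _ = QuadraticMap.polar Q v w + 2 * Q w := by
          rw [hfv, hfw, QuadraticMap.polar_add_left, QuadraticMap.polar_self, nsmul_eq_mul,
            Nat.cast_ofNat]
  exact hQ w ((mul_eq_zero.mp (left_eq_add.mp hpolar)).resolve_left h2)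

theorem eq_one_of_isNilpotent_sub_one (h2 : (2 : K) ≠ 0) (hQ : Q.Anisotropic)
    (hf : ∀ v, Q (f v) = Q v) (hu : IsNilpotent (f - 1)) : f = 1 :=
  sub_eq_zero.mp (eq_zero_of_isNilpotent_of_ker_sq_le hu (ker_sq_sub_one_le Q h2 hQ hf))

theorem sq_eq_one_of_pow_eq_one [FiniteDimensional K V] (h2 : (2 : K) ≠ 0) (hQ : Q.Anisotropic)
    (hf : ∀ v, Q (f v) = Q v) {n : ℕ} (hn : 0 < n) (hsplit : (X ^ n - 1 : K[X]).Splits)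
    (hfn : f ^ n = 1) : f ^ 2 = 1 := by
  have hmin : (minpoly K f).Splits :=
    hsplit.of_dvd (by simpa using X_pow_sub_C_ne_zero hn (1 : K)) (minpoly.dvd K f (by simp [hfn]))
  have hnil : IsNilpotent (f ^ 2 - 1) := by
    have := isNilpotent_aeval_of_forall_hasEigenvalue hmin (p := X ^ 2 - 1) fun r hr ↦ by
      simp [sq_eq_one_of_hasEigenvalue Q hQ hf hr]
    rwa [map_sub, map_pow, aeval_X, map_one] at this
  exact eq_one_of_isNilpotent_sub_one Q h2 hQ (fun v ↦ by rw [pow_two, mul_apply, hf, hf]) hnil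

end Isometry

section Involutions

theorem isCompl_ker_sub_one_ker_add_one (h2 : (2 : K) ≠ 0) {f : End K V} (hf : f * f = 1) :
    IsCompl (LinearMap.ker (f - 1)) (LinearMap.ker (f + 1)) := by
  have hff : ∀ v, f (f v) = v := fun v ↦ by rw [← mul_apply, hf, one_apply]
  constructor
  · rw [Submodule.disjoint_def]
    intro v h₁ h₂
    have h₁ : f v = v := by simpa [sub_eq_zero] using h₁
    have h₂ : f v + v = 0 := by simpa using h₂
    rw [h₁, ← two_smul K] at h₂
    exact (smul_eq_zero.mp h₂).resolve_left h2
  · rw [codisjoint_iff, eq_top_iff]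
    intro v _
    refine Submodule.mem_sup.mpr ⟨(2⁻¹ : K) • (v + f v), ?_, (2⁻¹ : K) • (v - f v), ?_, ?_⟩
    · simp [hff, add_comm]
    · simp [hff]
    · rw [← smul_add, add_add_sub_cancel, ← two_smul K, smul_smul, inv_mul_cancel₀ h2, one_smul]

def restrictSet (s : Set (End K V)) (p : Submodule K V) (hp : ∀ g ∈ s, MapsTo g p p) :
    Set (End K p) :=
  range fun g : s ↦ (g : End K V).restrict (hp g g.2)

variable {s : Set (End K V)} {p : Submodule K V} {hp : ∀ g ∈ s, MapsTo g p p}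

theorem finite_restrictSet (hs : s.Finite) : (restrictSet s p hp).Finite :=
  have := hs.to_subtype
  finite_range _

theorem mul_self_eq_one_of_mem_restrictSet (hinv : ∀ g ∈ s, g * g = 1) :
    ∀ h ∈ restrictSet s p hp, h * h = 1 := by
  rintro _ ⟨g, rfl⟩
  ext x
  exact LinearMap.congr_fun (hinv g g.2) x

theorem commute_of_mem_restrictSet (hcomm : ∀ f ∈ s, ∀ g ∈ s, Commute f g) :
    ∀ h ∈ restrictSet s p hp, ∀ h' ∈ restrictSet s p hp, Commute h h' := by
  rintro _ ⟨g, rfl⟩ _ ⟨g', rfl⟩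
  exact LinearMap.restrict_commute (hcomm g g.2 g' g'.2) _ _

theorem ncard_le_ncard_restrictSet_mul (hs : s.Finite) {q : Submodule K V} (hpq : Codisjoint p q)
    (hp : ∀ g ∈ s, MapsTo g p p) (hq : ∀ g ∈ s, MapsTo g q q) :
    s.ncard ≤ (restrictSet s p hp).ncard * (restrictSet s q hq).ncard := by
  have : Finite s := hs.to_subtype
  have : Finite (restrictSet s p hp) := (finite_restrictSet hs).to_subtype
  have : Finite (restrictSet s q hq) := (finite_restrictSet hs).to_subtype
  rw [← Nat.card_coe_set_eq, ← Nat.card_coe_set_eq, ← Nat.card_coe_set_eq, ← Nat.card_prod]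
  refine Nat.card_le_card_of_injective (fun g ↦ (⟨_, g, rfl⟩, ⟨_, g, rfl⟩)) fun g g' h ↦ ?_
  obtain ⟨hp', hq'⟩ := Prod.ext_iff.mp h
  refine Subtype.ext (LinearMap.ext_on_codisjoint hpq (fun x hx ↦ ?_) fun x hx ↦ ?_)
  · exact congrArg (fun u : restrictSet s p hp ↦ ((u : End K p) ⟨x, hx⟩ : V)) hp'
  · exact congrArg (fun u : restrictSet s q hq ↦ ((u : End K q) ⟨x, hx⟩ : V)) hq'

theorem ncard_le_two_pow_finrank [FiniteDimensional K V] (h2 : (2 : K) ≠ 0) (hs : s.Finite)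
    (hinv : ∀ f ∈ s, f * f = 1) (hcomm : ∀ f ∈ s, ∀ g ∈ s, Commute f g) :
    s.ncard ≤ 2 ^ finrank K V := by
  induction hn : finrank K V using Nat.strong_induction_on generalizing V with
  | _ n ih =>
  by_cases hne : ∃ f ∈ s, f ≠ 1 ∧ f ≠ -1
  · obtain ⟨f, hfs, hf1, hf2⟩ := hne
    have hpq := isCompl_ker_sub_one_ker_add_one h2 (hinv f hfs)
    have hp : ∀ g ∈ s, MapsTo g (LinearMap.ker (f - 1)) (LinearMap.ker (f - 1)) := fun g hg ↦
      mapsTo_ker_of_commute ((hcomm f hfs g hg).sub_left (Commute.one_left g))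
    have hq : ∀ g ∈ s, MapsTo g (LinearMap.ker (f + 1)) (LinearMap.ker (f + 1)) := fun g hg ↦
      mapsTo_ker_of_commute ((hcomm f hfs g hg).add_left (Commute.one_left g))
    have hp_lt : finrank K (LinearMap.ker (f - 1)) < n := hn ▸ Submodule.finrank_lt fun h ↦
      hf1 (sub_eq_zero.mp (LinearMap.ker_eq_top.mp h))
    have hq_lt : finrank K (LinearMap.ker (f + 1)) < n := hn ▸ Submodule.finrank_lt fun h ↦
      hf2 (eq_neg_of_add_eq_zero_left (LinearMap.ker_eq_top.mp h))
    calc s.ncard ≤ (restrictSet s _ hp).ncard * (restrictSet s _ hq).ncard :=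
          ncard_le_ncard_restrictSet_mul hs hpq.codisjoint hp hq
      _ ≤ 2 ^ finrank K (LinearMap.ker (f - 1)) * 2 ^ finrank K (LinearMap.ker (f + 1)) :=
          Nat.mul_le_mul
            (ih _ hp_lt (finite_restrictSet hs) (mul_self_eq_one_of_mem_restrictSet hinv)
              (commute_of_mem_restrictSet hcomm) rfl)
            (ih _ hq_lt (finite_restrictSet hs) (mul_self_eq_one_of_mem_restrictSet hinv)
              (commute_of_mem_restrictSet hcomm) rfl)
      _ = 2 ^ n := by rw [← pow_add, Submodule.finrank_add_eq_of_isCompl hpq, hn]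
  · push Not at hne
    rcases Nat.eq_zero_or_pos n with rfl | hpos
    · have : Subsingleton V := finrank_zero_iff.mp hn
      exact ncard_le_one_of_subsingleton s
    calc s.ncard ≤ ({1, -1} : Set (End K V)).ncard :=
          ncard_le_ncard fun f hf ↦ or_iff_not_imp_left.mpr (hne f hf)
      _ ≤ 2 := by simpa using ncard_insert_le (1 : End K V) {-1}
      _ ≤ 2 ^ n := le_self_pow (by norm_num) hpos.ne'

end Involutions

end Module.End

theorem LinearEquiv.sq_eq_one_of_isOfFinOrder {K V : Type*} [Field K] [AddCommGroup V]
    [Module K V] [FiniteDimensional K V] (h2 : (2 : K) ≠ 0)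
    (hroots : ∀ n : ℕ, 0 < n → (X ^ n - 1 : K[X]).Splits) {Q : QuadraticForm K V}
    (hQ : Q.Anisotropic) {g : V ≃ₗ[K] V} (hg : ∀ v, Q (g v) = Q v) (hord : IsOfFinOrder g) :
    g ^ 2 = 1 := by
  let φ := LinearEquiv.automorphismGroup.toLinearMapMonoidHom (R := K) (M := V)
  have hφ : Function.Injective φ := LinearEquiv.toLinearMap_injective
  obtain ⟨n, hn, hgn⟩ := hord.exists_pow_eq_one
  refine hφ ?_
  rw [map_pow, map_one]
  exact Module.End.sq_eq_one_of_pow_eq_one Q h2 hQ hg hn (hroots n hn)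
    (by rw [← map_pow, hgn, map_one])

/-- Let `K` be a field of characteristic `≠ 2` containing all roots of unity and `q` a
quadratic form on a finite-dimensional `K`-vector space `V` that does not represent `0`
nontrivially.  Then every finite-order element `g` of `O(V,q)(K)` satisfies `g² = 1`, and
every finite subgroup of `O(V,q)(K)` is abelian of order at most `2 ^ dim V`. -/
theorem stmt6 (K : Type) [Field K] (hchar : ringChar K ≠ 2)
    (hroots : ∀ n : ℕ, 0 < n → (Polynomial.X ^ n - 1 : Polynomial K).Splits)
    (V : Type) [AddCommGroup V] [Module K V] [FiniteDimensional K V]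
    (Q : QuadraticForm K V) (hQ : ∀ v : V, Q v = 0 → v = 0) :
    (∀ g : V ≃ₗ[K] V, (∀ v : V, Q (g v) = Q v) → IsOfFinOrder g → g ^ 2 = 1) ∧
    (∀ G : Subgroup (V ≃ₗ[K] V), (∀ g ∈ G, ∀ v : V, Q (g v) = Q v) →
      (G : Set (V ≃ₗ[K] V)).Finite →
      (∀ a ∈ G, ∀ b ∈ G, a * b = b * a) ∧ Nat.card G ≤ 2 ^ Module.finrank K V) := by
  have h2 : (2 : K) ≠ 0 := Ring.two_ne_zero hchar
  have hsq : ∀ g : V ≃ₗ[K] V, (∀ v, Q (g v) = Q v) → IsOfFinOrder g → g ^ 2 = 1 :=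
    fun _ ↦ LinearEquiv.sq_eq_one_of_isOfFinOrder h2 hroots hQ
  refine ⟨hsq, fun G hGQ hGfin ↦ ?_⟩
  have : Finite G := hGfin.to_subtype
  have hG2 : ∀ g ∈ G, g ^ 2 = 1 := fun g hg ↦ hsq g (hGQ g hg)
    (Submonoid.isOfFinOrder_coe.mpr (isOfFinOrder_of_finite (⟨g, hg⟩ : G)))
  have hcomm : ∀ a ∈ G, ∀ b ∈ G, a * b = b * a := fun a ha b hb ↦ congrArg Subtype.val
    (Commute.of_orderOf_dvd_two (fun g ↦ orderOf_dvd_of_pow_eq_one (Subtype.ext (hG2 g g.2)))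
      ⟨a, ha⟩ ⟨b, hb⟩).eq
  refine ⟨hcomm, ?_⟩
  let φ := LinearEquiv.automorphismGroup.toLinearMapMonoidHom (R := K) (M := V)
  have hφ : Function.Injective φ := LinearEquiv.toLinearMap_injective
  rw [← SetLike.coe_sort_coe, Nat.card_coe_set_eq, ← ncard_image_of_injective _ hφ]
  refine Module.End.ncard_le_two_pow_finrank h2 (hGfin.image φ) ?_ ?_
  · rintro _ ⟨g, hg, rfl⟩
    rw [← map_mul, ← sq, hG2 g hg, map_one]
  · rintro _ ⟨a, ha, rfl⟩ _ ⟨b, hb, rfl⟩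
    rw [commute_iff_eq, ← map_mul, ← map_mul, hcomm a ha b hb]
end

section
/- Let K be a field containing all roots of unity, let a ∈ K*, and suppose α is a root of y^m - a in an algebraic closure of K, with char K not dividing m. Let r be the minimal positive integer such that α^r ∈ K. Then r divides m and the polynomial y^r - α^r is irreducible over K. -/
/-!
Every conjugate `β` of `α` satisfies `β ^ m = α ^ m`, so `β / α` is an `m`-th root of unity
and lies in `K`. Hence the product of the conjugates, which is `±` the constant coefficient of
the minimal polynomial and so lies in `K`, equals `α ^ d` times an element of `K`, where `d` is
the degree of `α`. Minimality of `r` gives `r ≤ d`, and `X ^ r - α ^ r` annihilates `α`, so it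
is the minimal polynomial. That `r ∣ m` follows from minimality since `α ^ (m % r) ∈ K`.
-/

open Polynomial

theorem Subfield.dvd_of_pow_mem_of_minimal {L : Type*} [DivisionRing L] {S : Subfield L} {x : L}
    (hx : x ≠ 0) {r n : ℕ} (hr : 0 < r) (hxr : x ^ r ∈ S) (hxn : x ^ n ∈ S)
    (hmin : ∀ s, 0 < s → x ^ s ∈ S → r ≤ s) : r ∣ n := by
  have hmod : x ^ (n % r) ∈ S := by
    have : x ^ (n % r) = x ^ n / (x ^ r) ^ (n / r) := by
      rw [← pow_mul, eq_div_iff (pow_ne_zero _ hx), ← pow_add, Nat.mod_add_div]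
    rw [this]
    exact div_mem hxn (pow_mem hxr _)
  by_contra h
  exact (hmin _ (Nat.pos_of_ne_zero (mt Nat.dvd_of_mod_eq_zero h)) hmod).not_gt (Nat.mod_lt n hr)

section

variable {K L : Type*} [Field K] [Field L] [Algebra K L]

theorem mem_fieldRange_of_pow_eq_one {m : ℕ} (hm : 0 < m) (hsplit : (X ^ m - 1 : K[X]).Splits)
    {z : L} (hz : z ^ m = 1) : z ∈ (algebraMap K L).fieldRange := by
  have hne : (X ^ m - 1 : K[X]) ≠ 0 := by simpa using X_pow_sub_C_ne_zero hm (1 : K)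
  obtain ⟨w, hw⟩ := hsplit.mem_range_of_isRoot hne (i := algebraMap K L) (x := z) (by simp [hz])
  exact ⟨w, hw⟩

theorem Polynomial.Monic.prod_roots_map_mem_fieldRange {p : K[X]} (hp : p.Monic)
    (hs : (p.map (algebraMap K L)).Splits) :
    (p.map (algebraMap K L)).roots.prod ∈ (algebraMap K L).fieldRange := by
  refine ⟨(-1) ^ p.natDegree * p.coeff 0, ?_⟩
  rw [map_mul, map_pow, map_neg, map_one, ← coeff_map,
    hs.coeff_zero_eq_prod_roots_of_monic (hp.map _), Polynomial.natDegree_map, ← mul_assoc,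
    ← mul_pow]
  simp

theorem aeval_eq_zero_of_mem_roots_map_minpoly {α β : L} {q : K[X]} (hq : aeval α q = 0)
    (hβ : β ∈ ((minpoly K α).map (algebraMap K L)).roots) : aeval β q = 0 := by
  rw [aeval_def, eval₂_eq_eval_map]
  exact eval_eq_zero_of_dvd_of_eval_eq_zero (map_dvd _ (minpoly.dvd K α hq)) (mem_roots'.1 hβ).2

theorem pow_natDegree_minpoly_mem_fieldRange {α : L} (hα : IsIntegral K α) (hα0 : α ≠ 0)
    {m : ℕ}
    (hroots : ∀ z : L, z ^ m = 1 → z ∈ (algebraMap K L).fieldRange)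
    (hαm : α ^ m ∈ (algebraMap K L).fieldRange)
    (hs : ((minpoly K α).map (algebraMap K L)).Splits) :
    α ^ (minpoly K α).natDegree ∈ (algebraMap K L).fieldRange := by
  obtain ⟨a, ha⟩ := hαm
  set roots := ((minpoly K α).map (algebraMap K L)).roots
  have hconj : ∀ β ∈ roots, β ^ m = α ^ m := by
    intro β hβ
    have := aeval_eq_zero_of_mem_roots_map_minpoly (q := X ^ m - C a) (by simp [ha]) hβ
    simpa [ha, sub_eq_zero] using this
  have hcard : roots.card = (minpoly K α).natDegree := by
    rw [← hs.natDegree_eq_card_roots, natDegree_map]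
  set c := (roots.map (· / α)).prod with hc_def
  have hc : c ∈ (algebraMap K L).fieldRange := multiset_prod_mem _ fun z hz => by
    obtain ⟨β, hβ, rfl⟩ := Multiset.mem_map.1 hz
    exact hroots _ (by rw [div_pow, hconj β hβ, div_self (pow_ne_zero m hα0)])
  have hprod : α ^ (minpoly K α).natDegree * c = roots.prod := by
    rw [mul_comm, hc_def, Multiset.prod_map_div, Multiset.map_id', Multiset.map_const',
      Multiset.prod_replicate, hcard, div_mul_cancel₀ _ (pow_ne_zero _ hα0)]
  have hprod0 : roots.prod ≠ 0 := by
    intro h0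
    have h := hs.coeff_zero_eq_prod_roots_of_monic ((minpoly.monic hα).map _)
    rw [coeff_map, h0, mul_zero, map_eq_zero] at h
    exact minpoly.coeff_zero_ne_zero hα hα0 h
  have hc0 : c ≠ 0 := right_ne_zero_of_mul (hprod ▸ hprod0)
  rw [eq_div_of_mul_eq hc0 hprod]
  exact div_mem ((minpoly.monic hα).prod_roots_map_mem_fieldRange hs) hc

end

theorem stmt8_general (K : Type) [Field K]
    (hroots : ∀ n : ℕ, 0 < n → (Polynomial.X ^ n - 1 : Polynomial K).Splits)
    (m : ℕ) (hm : 0 < m)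
    (a : Kˣ) (α : AlgebraicClosure K)
    (hα : α ^ m = algebraMap K (AlgebraicClosure K) (a : K))
    (r : ℕ) (hr : 0 < r)
    (hmem : ∃ b : K, algebraMap K (AlgebraicClosure K) b = α ^ r)
    (hmin : ∀ s : ℕ, 0 < s → (∃ b : K, algebraMap K (AlgebraicClosure K) b = α ^ s) → r ≤ s) :
    r ∣ m ∧ ∀ b : K, algebraMap K (AlgebraicClosure K) b = α ^ r →
      Irreducible (Polynomial.X ^ r - Polynomial.C b) := by
  have hα0 : α ≠ 0 := by
    rintro rfl
    exact a.ne_zero (by simpa [zero_pow hm.ne'] using hα.symm)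
  have hαm : α ^ m ∈ (algebraMap K (AlgebraicClosure K)).fieldRange := ⟨a, hα.symm⟩
  refine ⟨Subfield.dvd_of_pow_mem_of_minimal hα0 hr hmem hαm hmin, fun b hb => ?_⟩
  have hint : IsIntegral K α := Algebra.IsIntegral.isIntegral α
  have hdeg : α ^ (minpoly K α).natDegree ∈ (algebraMap K (AlgebraicClosure K)).fieldRange :=
    pow_natDegree_minpoly_mem_fieldRange hint hα0
      (fun _ hz => mem_fieldRange_of_pow_eq_one hm (hroots m hm) hz) hαm (IsAlgClosed.splits _)
  have hr_le : r ≤ (minpoly K α).natDegree := hmin _ (minpoly.natDegree_pos hint) hdeg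
  have hminpoly : X ^ r - C b = minpoly K α :=
    minpoly.unique_of_degree_le_degree_minpoly K α (monic_X_pow_sub_C b hr.ne') (by simp [hb]) (by
      rw [degree_X_pow_sub_C hr, degree_eq_natDegree (minpoly.ne_zero hint)]
      exact_mod_cast hr_le)
  rw [hminpoly]
  exact minpoly.irreducible hint

/-- Kummer-theoretic step: `K` a field containing all roots of unity, `a ∈ K*`, `α` a root of
`y^m - a` in an algebraic closure of `K`, with `char K ∤ m`.  If `r` is the minimal positive
integer with `α^r ∈ K`, then `r ∣ m` and `y^r - α^r` is irreducible over `K`. -/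
theorem stmt8 (K : Type) [Field K]
    (hroots : ∀ n : ℕ, 0 < n → (Polynomial.X ^ n - 1 : Polynomial K).Splits)
    (m : ℕ) (hm : 0 < m) (hcharm : ¬ (ringChar K ∣ m))
    (a : Kˣ) (α : AlgebraicClosure K)
    (hα : α ^ m = algebraMap K (AlgebraicClosure K) (a : K))
    (r : ℕ) (hr : 0 < r)
    (hmem : ∃ b : K, algebraMap K (AlgebraicClosure K) b = α ^ r)
    (hmin : ∀ s : ℕ, 0 < s → (∃ b : K, algebraMap K (AlgebraicClosure K) b = α ^ s) → r ≤ s) :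
    r ∣ m ∧ ∀ b : K, algebraMap K (AlgebraicClosure K) b = α ^ r →
      Irreducible (Polynomial.X ^ r - Polynomial.C b) :=
  stmt8_general K hroots m hm a α hα r hr hmem hmin
end

section
/- Let K be a field containing all roots of unity, and let d > 1 be an integer coprime to char K. Let T be an n-dimensional algebraic torus over K. If T(K) contains an element of order d and the image Γ of Gal(K^sep/K) in Aut(X_*(T)) ≅ GL_n(ℤ) satisfies |Γ| < d, then T contains a subtorus isomorphic to 𝔾_m. -/
/-!
The orbit sum `w = ∑_{γ ∈ Γ} γ v` is `Γ`-invariant. Since every `γ v` is congruent to `v`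
modulo `d M`, we get `w ≡ |Γ| v (mod d M)`; so `w = 0` would make `|Γ| v` vanish in `M / d M`,
contradicting that `v` has exact order `d > |Γ|` there.
-/

theorem Submodule.sum_sub_card_nsmul_mem {R M ι : Type*} [Ring R] [AddCommGroup M] [Module R M]
    [Fintype ι] (N : Submodule R M) (f : ι → M) (v : M) (hf : ∀ i, f i - v ∈ N) :
    ∑ i, f i - Fintype.card ι • v ∈ N := by
  rw [← Finset.card_univ, ← Finset.sum_const, ← Finset.sum_sub_distrib]
  exact N.sum_mem fun i _ => hf i

theorem MonoidHom.apply_sum_apply {G R M : Type*} [Group G] [Fintype G] [Semiring R]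
    [AddCommMonoid M] [Module R M] (ρ : G →* (M ≃ₗ[R] M)) (v : M) (g : G) :
    ρ g (∑ h, ρ h v) = ∑ h, ρ h v := by
  rw [map_sum]
  exact Fintype.sum_equiv (Equiv.mulLeft g) _ _ fun h => by simp [LinearEquiv.mul_apply]

theorem stmt13_general
    (d : ℕ)
    (M : Type) [AddCommGroup M] [Module ℤ M]
    (Γ : Type) [Group Γ] [Finite Γ] (ρ : Γ →* (M ≃ₗ[ℤ] M))
    (hΓd : Nat.card Γ < d)
    (v : M)
    (hinv : ∀ γ : Γ, ρ γ v - v ∈ LinearMap.range ((d : ℤ) • (LinearMap.id : M →ₗ[ℤ] M)))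
    (hord : ∀ m : ℕ, 0 < m → m < d →
      ¬ ((m : ℤ) • v ∈ LinearMap.range ((d : ℤ) • (LinearMap.id : M →ₗ[ℤ] M)))) :
    ∃ w : M, w ≠ 0 ∧ ∀ γ : Γ, ρ γ w = w := by
  have := Fintype.ofFinite Γ
  refine ⟨∑ γ, ρ γ v, fun hw => hord (Nat.card Γ) Nat.card_pos hΓd ?_, ρ.apply_sum_apply v⟩
  have hcong := Submodule.sum_sub_card_nsmul_mem _ _ v hinv
  rwa [hw, zero_sub, Submodule.neg_mem_iff, ← Nat.card_eq_fintype_card, ← natCast_zsmul] at hcong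

/-- Let `K` be a field containing all roots of unity and `d > 1` an integer coprime to
`char K`.  Let `T` be an `n`-dimensional torus over `K`, encoded (via the anti-equivalence
of categories) by its cocharacter lattice `M`, a free `ℤ`-module of rank `n` equipped with
an action `ρ` of the finite image `Γ` of the Galois group.  Since `K` contains the `d`-th
roots of unity, an element of order `d` in `T(K)` corresponds to a `Γ`-invariant element
of exact order `d` in `M/dM` (expressed via a lift `v ∈ M`).  If moreover `|Γ| < d`, then
`T` contains a subtorus isomorphic to `𝔾ₘ`, i.e. there is a non-zero `Γ`-invariant
cocharacter `w ∈ M`. -/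
theorem stmt13 (K : Type) [Field K]
    (hroots : ∀ n : ℕ, 0 < n → (Polynomial.X ^ n - 1 : Polynomial K).Splits)
    (d : ℕ) (hd1 : 1 < d) (hdchar : ¬ (ringChar K ∣ d))
    (n : ℕ) (M : Type) [AddCommGroup M] [Module ℤ M] [Module.Free ℤ M] [Module.Finite ℤ M]
    (hrank : Module.finrank ℤ M = n)
    (Γ : Type) [Group Γ] [Finite Γ] (ρ : Γ →* (M ≃ₗ[ℤ] M))
    (hΓd : Nat.card Γ < d)
    (v : M)
    (hinv : ∀ γ : Γ, ρ γ v - v ∈ LinearMap.range ((d : ℤ) • (LinearMap.id : M →ₗ[ℤ] M)))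
    (hord : ∀ m : ℕ, 0 < m → m < d →
      ¬ ((m : ℤ) • v ∈ LinearMap.range ((d : ℤ) • (LinearMap.id : M →ₗ[ℤ] M)))) :
    ∃ w : M, w ≠ 0 ∧ ∀ γ : Γ, ρ γ w = w :=
  stmt13_general d M Γ ρ hΓd v hinv hord
end

section
/- Let K be a field containing all roots of unity, and let T be a one-dimensional algebraic torus over K not isomorphic to 𝔾_m. Then every non-trivial finite subgroup of T(K) has order 2. -/
/-!
Choosing a generator of `M ≅ ℤ` identifies `T(L) = M ⊗ Lˣ` with `Lˣ`. An automorphism of a rank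
one lattice is `±1`, so some `σ` acts on `M` by `-1`, and on `Lˣ` the twisted action of `σ` is
`v ↦ σ(v)⁻¹`. A point of a finite subgroup of `T(K)` is a root of unity, hence lies in `K` and is
fixed by `σ`; invariance then forces `v = v⁻¹`, so the subgroup embeds in `μ₂(L) = {±1}`.
-/

/-- The diagonal Galois action on `T(L) = M ⊗_ℤ Lˣ`, where `M` is the cocharacter lattice
of a torus `T` over `K`, `L` is a separable closure of `K`, and `ρ` encodes the Galois
action on `M`. -/
noncomputable def galActOnPoints' (K L : Type) [Field K] [Field L] [Algebra K L]
    (M : Type) [AddCommGroup M] [Module ℤ M]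
    (ρ : (L ≃ₐ[K] L) →* (M ≃ₗ[ℤ] M)) (σ : L ≃ₐ[K] L) :
    TensorProduct ℤ M (Additive Lˣ) →ₗ[ℤ] TensorProduct ℤ M (Additive Lˣ) :=
  TensorProduct.map (ρ σ : M →ₗ[ℤ] M)
    (((MulEquiv.toAdditive
      (Units.mapEquiv (σ.toRingEquiv.toMulEquiv))).toIntLinearEquiv :
        Additive Lˣ ≃ₗ[ℤ] Additive Lˣ) : Additive Lˣ →ₗ[ℤ] Additive Lˣ)

theorem Int.linearEquiv_apply_eq_neg_of_ne_one {g : ℤ ≃ₗ[ℤ] ℤ} (hg : g ≠ 1) (k : ℤ) :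
    g k = -k := by
  have hmul (k : ℤ) : g k = k * g 1 := by simpa using g.map_smul k 1
  have hunit : g 1 * g.symm 1 = 1 := by rw [mul_comm, ← hmul, g.apply_symm_apply]
  rcases Int.eq_one_or_neg_one_of_mul_eq_one hunit with h | h
  · exact absurd (LinearEquiv.ext fun k => by simp [hmul k, h]) hg
  · simp [hmul k, h]

theorem LinearEquiv.apply_eq_neg_of_ne_one_of_finrank_eq_one {M : Type*} [AddCommGroup M]
    [Module ℤ M] [Module.Free ℤ M] (h : Module.finrank ℤ M = 1) {f : M ≃ₗ[ℤ] M} (hf : f ≠ 1)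
    (m : M) : f m = -m := by
  obtain ⟨e⟩ := Module.nonempty_linearEquiv_of_finrank_eq_one h
  have hg : (e.trans f).trans e.symm ≠ 1 := fun hg =>
    hf (LinearEquiv.ext fun m => by simpa using congr(e ($hg (e.symm m))))
  simpa using congr(e $(Int.linearEquiv_apply_eq_neg_of_ne_one hg (e.symm m)))

theorem AlgEquiv.apply_eq_self_of_pow_eq_one {K L : Type*} [Field K] [Field L] [Algebra K L]
    {n : ℕ} (hn : 0 < n) (hsplit : (Polynomial.X ^ n - 1 : Polynomial K).Splits) {v : L}
    (hv : v ^ n = 1) (σ : L ≃ₐ[K] L) : σ v = v := by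
  have hv' : v ∈ (Polynomial.X ^ n - 1 : Polynomial K).rootSet L := by
    rw [Polynomial.mem_rootSet]
    exact ⟨Polynomial.X_pow_sub_C_ne_zero hn 1, by simp [hv]⟩
  rw [← (hsplit.map (RingHom.id K)).image_rootSet (Algebra.ofId K L)] at hv'
  obtain ⟨c, -, rfl⟩ := hv'
  exact σ.commutes c

section Points

variable {K L : Type} [Field K] [Field L] [Algebra K L] {M : Type} [AddCommGroup M]
  [Module ℤ M]

/- Built with `AddEquiv.mk'` rather than `toAddEquiv`: the tensor product carries two `Module ℤ`
instances (`TensorProduct.instModule`, `AddCommGroup.toIntModule`) that do not unify at instance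
transparency. -/
noncomputable def pointsEquivUnits (e : ℤ ≃ₗ[ℤ] M) :
    TensorProduct ℤ M (Additive Lˣ) ≃+ Additive Lˣ :=
  let f := TensorProduct.congr e.symm (LinearEquiv.refl ℤ (Additive Lˣ)) ≪≫ₗ
    TensorProduct.lid ℤ (Additive Lˣ)
  AddEquiv.mk' f.toEquiv f.map_add

theorem pointsEquivUnits_tmul (e : ℤ ≃ₗ[ℤ] M) (m : M) (a : Additive Lˣ) :
    pointsEquivUnits e (m ⊗ₜ a) = e.symm m • a :=
  TensorProduct.lid_tmul a (e.symm m)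

theorem pointsEquivUnits_galActOnPoints' (e : ℤ ≃ₗ[ℤ] M) (ρ : (L ≃ₐ[K] L) →* (M ≃ₗ[ℤ] M))
    {σ : L ≃ₐ[K] L} (hσ : ∀ m, ρ σ m = -m) (x : TensorProduct ℤ M (Additive Lˣ)) :
    pointsEquivUnits e (galActOnPoints' K L M ρ σ x) =
      -Additive.ofMul (Units.map (σ : L →* L) (pointsEquivUnits e x).toMul) := by
  induction x using TensorProduct.induction_on with
  | zero => simp
  | tmul m a =>
    change pointsEquivUnits (L := L) e
      (ρ σ m ⊗ₜ Additive.ofMul (Units.map (σ : L →* L) a.toMul)) = _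
    rw [hσ, pointsEquivUnits_tmul, pointsEquivUnits_tmul, map_neg, neg_smul, toMul_zsmul,
      map_zpow, ofMul_zpow]
  | add x y hx hy => simp [hx, hy, add_comm]

theorem pointsEquivUnits_sq_eq_one (e : ℤ ≃ₗ[ℤ] M) (ρ : (L ≃ₐ[K] L) →* (M ≃ₗ[ℤ] M))
    {σ : L ≃ₐ[K] L} (hσ : ∀ m, ρ σ m = -m) {x : TensorProduct ℤ M (Additive Lˣ)}
    (hx : galActOnPoints' K L M ρ σ x = x) {n : ℕ} (hn : 0 < n)
    (hsplit : (Polynomial.X ^ n - 1 : Polynomial K).Splits) (hnx : n • x = 0) :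
    (pointsEquivUnits e x).toMul ^ 2 = 1 := by
  have hpow : (pointsEquivUnits e x).toMul ^ n = 1 := by
    rw [← toMul_nsmul, ← map_nsmul, hnx, map_zero, toMul_zero]
  have hinv := congr(Additive.toMul $(pointsEquivUnits_galActOnPoints' e ρ hσ x))
  rw [hx, toMul_neg, toMul_ofMul] at hinv
  set u := (pointsEquivUnits e x).toMul
  have hσu : Units.map (σ : L →* L) u = u := Units.ext <|
    σ.apply_eq_self_of_pow_eq_one hn hsplit
      (by rw [← Units.val_pow_eq_pow_val, hpow, Units.val_one])
  rw [hσu] at hinv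
  rw [sq]
  exact mul_eq_one_iff_eq_inv.2 hinv

end Points

theorem stmt17_general (K : Type) [Field K]
    (hroots : ∀ n : ℕ, 0 < n → ((Polynomial.X ^ n - 1 : Polynomial K).map (RingHom.id K)).Splits)
    (L : Type) [Field L] [Algebra K L]
    (M : Type) [AddCommGroup M] [Module ℤ M] [Module.Free ℤ M]
    (hrank : Module.finrank ℤ M = 1)
    (ρ : (L ≃ₐ[K] L) →* (M ≃ₗ[ℤ] M))
    (hnotGm : ∃ σ : L ≃ₐ[K] L, ρ σ ≠ 1) :
    ∀ G : AddSubgroup (TensorProduct ℤ M (Additive Lˣ)),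
      (∀ x ∈ G, ∀ σ : L ≃ₐ[K] L, galActOnPoints' K L M ρ σ x = x) →
      (G : Set (TensorProduct ℤ M (Additive Lˣ))).Finite →
      G ≠ ⊥ → Nat.card G = 2 := by
  intro G hfix hfinite hne
  have : Finite G := hfinite.to_subtype
  obtain ⟨σ, hσ⟩ := hnotGm
  obtain ⟨e⟩ := Module.nonempty_linearEquiv_of_finrank_eq_one hrank
  have hneg := LinearEquiv.apply_eq_neg_of_ne_one_of_finrank_eq_one hrank hσ
  have hsq (x : G) : (pointsEquivUnits e x.1).toMul ^ 2 = 1 := by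
    have hn := addOrderOf_pos x
    exact pointsEquivUnits_sq_eq_one e ρ hneg (hfix x x.2 σ) hn
      (by simpa using hroots _ hn) (by exact_mod_cast addOrderOf_nsmul_eq_zero x)
  let toRoots (x : G) : rootsOfUnity 2 L :=
    ⟨(pointsEquivUnits e x.1).toMul, (mem_rootsOfUnity _ _).2 (hsq x)⟩
  have hinj : Function.Injective toRoots := fun x y hxy =>
    Subtype.ext ((pointsEquivUnits e).injective (Additive.toMul.injective congr($hxy.1)))
  have hle := (Nat.card_le_card_of_injective toRoots hinj).trans (card_rootsOfUnity L 2)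
  have hgt := (AddSubgroup.one_lt_card_iff_ne_bot G).2 hne
  omega

/-- Let `K` be a field containing all roots of unity and let `T` be a one-dimensional
torus over `K` not isomorphic to `𝔾ₘ`.  Then every non-trivial finite subgroup of `T(K)`
has order `2`.  Here `T` is encoded by its cocharacter lattice `M` (a free `ℤ`-module of
rank `1`) together with a Galois action `ρ` with finite image; `T(L) = M ⊗_ℤ Lˣ` for `L`
a separable closure of `K`, and `T(K)` is the set of Galois-invariant points.  The
condition `T ≇ 𝔾ₘ` says that the Galois action on `M` is non-trivial. -/
theorem stmt17 (K : Type) [Field K]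
    (hroots : ∀ n : ℕ, 0 < n → ((Polynomial.X ^ n - 1 : Polynomial K).map (RingHom.id K)).Splits)
    (L : Type) [Field L] [Algebra K L] [IsSepClosure K L]
    (M : Type) [AddCommGroup M] [Module ℤ M] [Module.Free ℤ M] [Module.Finite ℤ M]
    (hrank : Module.finrank ℤ M = 1)
    (ρ : (L ≃ₐ[K] L) →* (M ≃ₗ[ℤ] M)) (hfin : (Set.range ρ).Finite)
    (hnotGm : ∃ σ : L ≃ₐ[K] L, ρ σ ≠ 1) :
    ∀ G : AddSubgroup (TensorProduct ℤ M (Additive Lˣ)),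
      (∀ x ∈ G, ∀ σ : L ≃ₐ[K] L, galActOnPoints' K L M ρ σ x = x) →
      (G : Set (TensorProduct ℤ M (Additive Lˣ))).Finite →
      G ≠ ⊥ → Nat.card G = 2 :=
  stmt17_general K hroots L M hrank ρ hnotGm
end

section
/- Let K be a field of characteristic p > 0, and let A be the K-algebra generated by elements u, v subject to the relations v^p = x, u^p = y, vu − uv = 1, where K = F(x,y) is the rational function field in two variables over a field F of characteristic p. Then (uv)^p − uv = u^p v^p ∈ K. -/
/-!
Put `t = u * v`. From `v * u = u * v + 1` one gets `t * v = v * (t - 1)`, hence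
`u ^ k * v ^ k = t (t - 1) ⋯ (t - k + 1)`, the descending Pochhammer polynomial evaluated at `t`.
In characteristic `p` this polynomial of degree `p` is `X ^ p - X`: both are monic of degree `p`
and vanish on all of `ZMod p`.
-/

open Polynomial

theorem descPochhammer_zmod_eq_X_pow_sub_X (p : ℕ) [Fact p.Prime] :
    descPochhammer (ZMod p) p = X ^ p - X := by
  have hp := (Fact.out : p.Prime).one_lt
  have hdesc : IsMonicOfDegree (descPochhammer (ZMod p) p) p :=
    ⟨descPochhammer_natDegree _ p, monic_descPochhammer _ p⟩
  have hsub : IsMonicOfDegree (X ^ p - X : (ZMod p)[X]) p :=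
    (isMonicOfDegree_X_pow (ZMod p) p).sub (by rwa [natDegree_X])
  refine eq_of_degree_sub_lt_of_eval_finset_eq Finset.univ ?_ fun a _ => ?_
  · rw [Finset.card_univ, ZMod.card]
    exact degree_le_natDegree.trans_lt (mod_cast hdesc.natDegree_sub_lt (by lia) hsub)
  · rw [eval_sub, eval_pow, eval_X, ZMod.pow_card, sub_self, ← ZMod.natCast_zmod_val a]
    exact descPochhammer_eval_coe_nat_of_lt a.val_lt

theorem descPochhammer_eq_X_pow_sub_X {R : Type*} [Ring R] {p : ℕ} (hp : p.Prime)
    (hpR : (p : R) = 0) : descPochhammer R p = X ^ p - X := by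
  rcases subsingleton_or_nontrivial R with hR | hR
  · exact Subsingleton.elim _ _
  have : Fact p.Prime := ⟨hp⟩
  have : CharP R p := (CharP.charP_iff_prime_eq_zero hp).2 hpR
  rw [← descPochhammer_map (ZMod.castHom dvd_rfl R), descPochhammer_zmod_eq_X_pow_sub_X,
    Polynomial.map_sub, Polynomial.map_pow, map_X]

section Commutator

variable {R : Type*} [Ring R] {u v : R}

theorem mul_mul_pow_eq_pow_mul_sub (hcomm : v * u - u * v = 1) (k : ℕ) :
    u * v * v ^ k = v ^ k * (u * v - k) := by
  induction k with
  | zero => simp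
  | succ k ih =>
    have hvu : v * u = u * v + 1 := by rw [← hcomm]; abel
    calc u * v * v ^ (k + 1) = v ^ k * (u * v - k) * v := by rw [pow_succ, ← mul_assoc, ih]
      _ = v ^ k * (u * v * v - k * v) := by noncomm_ring
      _ = v ^ k * (v * u * v - v - v * k) := by rw [hvu, Nat.cast_comm]; noncomm_ring
      _ = v ^ (k + 1) * (u * v - (k + 1 : ℕ)) := by push_cast; noncomm_ring

theorem pow_mul_pow_eq_descPochhammer_eval (hcomm : v * u - u * v = 1) (k : ℕ) :
    u ^ k * v ^ k = (descPochhammer R k).eval (u * v) := by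
  induction k with
  | zero => simp
  | succ k ih =>
    calc u ^ (k + 1) * v ^ (k + 1) = u ^ k * (u * v * v ^ k) := by
          rw [pow_succ, pow_succ']; noncomm_ring
      _ = (descPochhammer R (k + 1)).eval (u * v) := by
          rw [mul_mul_pow_eq_pow_mul_sub hcomm, ← mul_assoc, ih, descPochhammer_succ_eval]

theorem mul_pow_sub_mul_eq_pow_mul_pow {p : ℕ} (hp : p.Prime) (hpR : (p : R) = 0)
    (hcomm : v * u - u * v = 1) : (u * v) ^ p - u * v = u ^ p * v ^ p := by
  rw [pow_mul_pow_eq_descPochhammer_eval hcomm, descPochhammer_eq_X_pow_sub_X hp hpR, eval_sub,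
    eval_X_pow, eval_X]

end Commutator

theorem stmt18_general (p : ℕ) (hp : p.Prime) (F : Type) [Field F] [CharP F p]
    (K : Type) [Field K] [Algebra (MvPolynomial (Fin 2) F) K]
    (x y : K)
    (A : Type) [Ring A] [Algebra K A] (u v : A)
    (hv : v ^ p = algebraMap K A x) (hu : u ^ p = algebraMap K A y)
    (hcomm : v * u - u * v = 1) :
    (u * v) ^ p - u * v = u ^ p * v ^ p ∧
      (u * v) ^ p - u * v = algebraMap K A (y * x) := by
  let f : F →+* A :=
    (algebraMap K A).comp ((algebraMap (MvPolynomial (Fin 2) F) K).comp MvPolynomial.C)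
  have hpA : (p : A) = 0 := by rw [← map_natCast f, CharP.cast_eq_zero, map_zero]
  have key := mul_pow_sub_mul_eq_pow_mul_pow hp hpA hcomm
  exact ⟨key, by rw [key, hu, hv, map_mul]⟩

/-- Let `F` be a field of characteristic `p > 0` and `K = F(x,y)` the rational function
field in two variables (realised as the fraction field of `F[x,y]`).  Let `A` be the
`K`-algebra generated by `u, v` with relations `v^p = x`, `u^p = y`, `vu - uv = 1`.
Then `(uv)^p - uv = u^p v^p`, an element of `K`. -/
theorem stmt18 (p : ℕ) (hp : p.Prime) (F : Type) [Field F] [CharP F p]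
    (K : Type) [Field K] [Algebra (MvPolynomial (Fin 2) F) K]
    [IsFractionRing (MvPolynomial (Fin 2) F) K]
    (x y : K)
    (hx : x = algebraMap (MvPolynomial (Fin 2) F) K (MvPolynomial.X 0))
    (hy : y = algebraMap (MvPolynomial (Fin 2) F) K (MvPolynomial.X 1))
    (A : Type) [Ring A] [Algebra K A] (u v : A)
    (hgen : Algebra.adjoin K {u, v} = ⊤)
    (hv : v ^ p = algebraMap K A x) (hu : u ^ p = algebraMap K A y)
    (hcomm : v * u - u * v = 1) :
    (u * v) ^ p - u * v = u ^ p * v ^ p ∧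
      (u * v) ^ p - u * v = algebraMap K A (y * x) :=
  stmt18_general p hp F K x y A u v hv hu hcomm
end

section
/- Let A be a central division algebra of dimension p² over a field K of characteristic p, and suppose v ∈ A is inseparable over K (so v^p ∈ K and v ∉ K). Then there exists u ∈ A with vu − uv = 1 and u^p ∈ K. -/
/-!
In characteristic `p`, `ad v = L_v - R_v` satisfies `(ad v)^p = ad (v^p) = 0`, and `ad v ≠ 0`
since `v` is not central. A nonzero nilpotent map admits `y` with `c = (ad v) y ≠ 0` and
`(ad v) c = 0`; then `c` commutes with `v`, and `u = c⁻¹ y` satisfies `vu - uv = 1`.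

On `K[u]`, `ad v` acts as `d/du`, so the minimal polynomial `f` of `u` has `f' = 0`, i.e.
`f = g(X^p)`. As `K[u]` is a field, `p · deg g = deg f` divides `[K[u] : K]`, a proper divisor of
`[A : K] = p²` because `v ∉ K[u]`. Hence `deg g = 1`, that is, `u^p ∈ K`.
-/

open Polynomial

theorem Module.End.exists_apply_ne_zero_apply_apply_eq_zero {R M : Type*} [Semiring R]
    [AddCommMonoid M] [Module R M] {D : Module.End R M} (hD : IsNilpotent D) (h0 : D ≠ 0) :
    ∃ y, D y ≠ 0 ∧ D (D y) = 0 := by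
  have : Nontrivial (Module.End R M) := ⟨⟨D, 0, h0⟩⟩
  obtain ⟨k, hk⟩ : ∃ k, nilpotencyClass D = k + 2 := by
    have h1 : nilpotencyClass D ≠ 1 := by rwa [Ne, nilpotencyClass_eq_one]
    have h2 : 0 < nilpotencyClass D := pos_nilpotencyClass_iff.mpr hD
    exact ⟨nilpotencyClass D - 2, by omega⟩
  obtain ⟨w, hw⟩ : ∃ w, (D ^ (k + 1)) w ≠ 0 := by
    by_contra! h
    exact pow_pred_nilpotencyClass hD (by rw [hk]; exact LinearMap.ext h)
  have hDk : D ^ (k + 2) = 0 := hk ▸ pow_nilpotencyClass hD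
  refine ⟨(D ^ k) w, by rwa [pow_succ', Module.End.mul_apply] at hw, ?_⟩
  simpa only [pow_succ', Module.End.mul_apply, LinearMap.zero_apply] using
    LinearMap.congr_fun hDk w

theorem LinearMap.mulLeft_sub_mulRight_pow_char {R A : Type*} [CommRing R] [Ring A] [Algebra R A]
    (p : ℕ) [Fact p.Prime] [CharP A p] (v : A) :
    (mulLeft R v - mulRight R v) ^ p = mulLeft R (v ^ p) - mulRight R (v ^ p) := by
  have : CharP (Module.End R A) p := charP_of_injective_ringHom (Algebra.lmul_injective (R := R)) p
  rw [sub_pow_char_of_commute p (commute_mulLeft_right v v), pow_mulLeft, pow_mulRight]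

theorem exists_mul_sub_mul_eq_one {A : Type*} [DivisionRing A] (p : ℕ) [Fact p.Prime] [CharP A p]
    {v : A} (hvp : ∀ b, Commute (v ^ p) b) (hv : ∃ b, ¬Commute v b) :
    ∃ u, v * u - u * v = 1 := by
  set D := LinearMap.mulLeft ℤ v - LinearMap.mulRight ℤ v
  have hD : IsNilpotent D := ⟨p, by
    rw [LinearMap.mulLeft_sub_mulRight_pow_char]
    ext b
    exact sub_eq_zero.mpr (hvp b).eq⟩
  have hD0 : D ≠ 0 := by
    obtain ⟨b, hb⟩ := hv
    exact fun h => hb (sub_eq_zero.mp (LinearMap.congr_fun h b))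
  obtain ⟨y, hy, hyy⟩ := Module.End.exists_apply_ne_zero_apply_apply_eq_zero hD hD0
  have hvc : Commute v (D y)⁻¹ := Commute.inv_right₀ (sub_eq_zero.mp hyy)
  refine ⟨(D y)⁻¹ * y, ?_⟩
  calc v * ((D y)⁻¹ * y) - (D y)⁻¹ * y * v = (D y)⁻¹ * D y := by
        rw [← mul_assoc, hvc.eq, mul_assoc, mul_assoc, ← mul_sub]; rfl
    _ = 1 := inv_mul_cancel₀ hy

section Commutator

variable {R A : Type*} [CommRing R] [Ring A] [Algebra R A] {u v : A}

theorem mul_pow_sub_pow_mul_of_mul_sub_mul_eq_one (h : v * u - u * v = 1) (n : ℕ) :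
    v * u ^ (n + 1) - u ^ (n + 1) * v = (n + 1 : ℕ) * u ^ n := by
  induction n with
  | zero => simpa using h
  | succ n ih =>
    calc v * u ^ (n + 2) - u ^ (n + 2) * v
        = (v * u ^ (n + 1) - u ^ (n + 1) * v) * u + u ^ (n + 1) * (v * u - u * v) := by
          rw [pow_succ _ (n + 1)]; noncomm_ring
      _ = (n + 2 : ℕ) * u ^ (n + 1) := by
          rw [ih, h, mul_one, mul_assoc, ← pow_succ, ← add_one_mul, ← Nat.cast_add_one]

theorem mul_aeval_sub_aeval_mul_of_mul_sub_mul_eq_one (h : v * u - u * v = 1) (f : R[X]) :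
    v * aeval u f - aeval u f * v = aeval u (derivative f) := by
  induction f using Polynomial.induction_on' with
  | add f g hf hg => simp only [map_add, ← hf, ← hg]; noncomm_ring
  | monomial n a =>
    cases n with
    | zero => simp [Algebra.commutes]
    | succ n =>
      rw [derivative_monomial, aeval_monomial, aeval_monomial, Nat.add_sub_cancel, map_mul,
        map_natCast, mul_assoc _ (_ : A) (u ^ n), ← mul_pow_sub_pow_mul_of_mul_sub_mul_eq_one h,
        mul_sub, ← mul_assoc v, ← Algebra.commutes, mul_assoc, mul_assoc]

theorem derivative_minpoly_eq_zero_of_mul_sub_mul_eq_one {K : Type*} [Field K] [Algebra K A]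
    (h : v * u - u * v = 1) (hu : IsIntegral K u) : derivative (minpoly K u) = 0 := by
  by_contra hne
  have hroot : aeval u (derivative (minpoly K u)) = 0 := by
    rw [← mul_aeval_sub_aeval_mul_of_mul_sub_mul_eq_one h, minpoly.aeval, mul_zero, zero_mul,
      sub_zero]
  exact (minpoly.degree_le_of_ne_zero K u hne hroot).not_gt
    (degree_derivative_lt (minpoly.ne_zero hu))

end Commutator

section DivisionAlgebra

open Module Algebra
open scoped IsMulCommutative

variable {K A : Type*} [Field K] [DivisionRing A] [Algebra K A]

theorem isField_adjoin_singleton {u : A} (hu : IsIntegral K u) : IsField (adjoin K {u}) :=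
  have : Module.Finite K (adjoin K {u}) := .of_fg hu.fg_adjoin_singleton
  isField_of_isIntegral_of_isField' (R := K) (Field.toIsField K)

theorem natDegree_minpoly_dvd_finrank_adjoin {u : A} (hu : IsIntegral K u) :
    (minpoly K u).natDegree ∣ finrank K (adjoin K {u}) := by
  let := (isField_adjoin_singleton hu).toField
  let u' : adjoin K {u} := ⟨u, self_mem_adjoin_singleton K u⟩
  have hu' : minpoly K u = minpoly K u' :=
    minpoly.algHom_eq (adjoin K {u}).val Subtype.val_injective u'
  rw [hu']
  have : Module.Finite K (adjoin K {u}) := .of_fg hu.fg_adjoin_singleton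
  exact minpoly.degree_dvd (.of_finite K u')

theorem finrank_adjoin_dvd_finrank [FiniteDimensional K A] (u : A) :
    finrank K (adjoin K {u}) ∣ finrank K A := by
  let := (isField_adjoin_singleton (.of_finite K u)).toField
  exact Dvd.intro _ (finrank_mul_finrank K (adjoin K {u}) A)

theorem finrank_adjoin_lt_finrank_of_not_commute [FiniteDimensional K A] {u v : A}
    (h : ¬Commute u v) :
    finrank K (adjoin K {u}) < finrank K A := by
  refine Submodule.finrank_lt (s := Subalgebra.toSubmodule (adjoin K {u})) fun htop => h ?_
  refine commute_of_mem_adjoin_self (R := K) ?_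
  rw [← Subalgebra.mem_toSubmodule, htop]
  exact Submodule.mem_top

end DivisionAlgebra

theorem mem_range_algebraMap_of_natDegree_eq_one_of_aeval_eq_zero {K A : Type*} [Field K] [Ring A]
    [Nontrivial A] [Algebra K A] {x : A} {g : K[X]} (hg : g.natDegree = 1) (hx : aeval x g = 0) :
    x ∈ Set.range (algebraMap K A) := by
  have hg0 : g ≠ 0 := by rintro rfl; simp at hg
  have hint : IsIntegral K x := IsAlgebraic.isIntegral ⟨g, hg0, hx⟩
  rw [← RingHom.coe_range, SetLike.mem_coe, ← minpoly.natDegree_eq_one_iff]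
  refine le_antisymm ?_ (minpoly.natDegree_pos hint)
  exact hg ▸ natDegree_le_natDegree (minpoly.degree_le_of_ne_zero K x hg0 hx)

theorem pow_char_mem_range_of_mul_sub_mul_eq_one {K A : Type*} [Field K] [DivisionRing A]
    [Algebra K A] [FiniteDimensional K A] (p : ℕ) [hp : Fact p.Prime] [CharP K p]
    (hdim : Module.finrank K A = p ^ 2) {u v : A} (h : v * u - u * v = 1) :
    u ^ p ∈ Set.range (algebraMap K A) := by
  have hu : IsIntegral K u := .of_finite K u
  have hf : expand K p (contract p (minpoly K u)) = minpoly K u :=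
    expand_contract p (derivative_minpoly_eq_zero_of_mul_sub_mul_eq_one h hu) hp.out.ne_zero
  have hnc : ¬Commute u v := fun hc => one_ne_zero (h ▸ sub_eq_zero.mpr hc.eq.symm)
  have hadj : Module.finrank K (Algebra.adjoin K {u}) ∣ p := by
    obtain ⟨i, -, hm⟩ := (Nat.dvd_prime_pow hp.out).mp (hdim ▸ finrank_adjoin_dvd_finrank u)
    have hlt : p ^ i < p ^ 2 := hm ▸ hdim ▸ finrank_adjoin_lt_finrank_of_not_commute hnc
    have hi1 : i ≤ 1 := by rw [Nat.pow_lt_pow_iff_right hp.out.one_lt] at hlt; omega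
    rw [hm]
    exact (pow_dvd_pow p hi1).trans (pow_one p).dvd
  have hdeg : (contract p (minpoly K u)).natDegree * p ∣ 1 * p := by
    rw [← natDegree_expand, hf, one_mul]
    exact (natDegree_minpoly_dvd_finrank_adjoin hu).trans hadj
  refine mem_range_algebraMap_of_natDegree_eq_one_of_aeval_eq_zero
    (Nat.dvd_one.mp ((Nat.mul_dvd_mul_iff_right hp.out.pos).mp hdeg)) ?_
  rw [← expand_aeval, hf, minpoly.aeval]

/-- Let `A` be a central division algebra of dimension `p²` over a field `K` of
characteristic `p`, and let `v ∈ A` be inseparable over `K` (so `v^p ∈ K` but `v ∉ K`).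
Then there exists `u ∈ A` with `vu - uv = 1` and `u^p ∈ K`. -/
theorem stmt19 (p : ℕ) (hp : p.Prime) (K : Type) [Field K] [CharP K p]
    (A : Type) [DivisionRing A] [Algebra K A]
    (hdim : Module.finrank K A = p ^ 2)
    (hcentral : ∀ a : A, (∀ b : A, a * b = b * a) → ∃ k : K, algebraMap K A k = a)
    (v : A) (hvp : ∃ k : K, algebraMap K A k = v ^ p)
    (hv : v ∉ Set.range (algebraMap K A)) :
    ∃ u : A, v * u - u * v = 1 ∧ ∃ k : K, algebraMap K A k = u ^ p := by
  have : Fact p.Prime := ⟨hp⟩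
  have : FiniteDimensional K A := .of_finrank_pos (hdim ▸ pow_pos hp.pos 2)
  have : CharP A p := charP_of_injective_algebraMap (algebraMap K A).injective p
  obtain ⟨k, hk⟩ := hvp
  have hvp_central : ∀ b, Commute (v ^ p) b := fun b => hk ▸ Algebra.commutes k b
  have hv_noncentral : ∃ b, ¬Commute v b := by
    by_contra! hcomm
    exact hv (hcentral v hcomm)
  obtain ⟨u, hu⟩ := exists_mul_sub_mul_eq_one p hvp_central hv_noncentral
  exact ⟨u, hu, pow_char_mem_range_of_mul_sub_mul_eq_one p hdim hu⟩
end
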